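/- arXiv:2301.04541 — 6 statements merged into one kernel-verified Lean document; each statement's English description precedes it below -/
import Mathlib

section
/- Let V be a commutative unital ring and I an idempotent ideal of V (I·I = I) such that Ĩ := I ⊗_V I is flat as a V-module. Then a V-module M satisfies I·M = 0 if and only if Ĩ ⊗_V M = 0. -/
open TensorProduct

/-- The multiplication (smul) map `I ⊗[V] I → V` induced by the inclusion. -/
noncomputable def idealMul {V : Type} [CommRing V] (I : Ideal V) :
    (↥I ⊗[V] ↥I) →ₗ[V] V :=
  TensorProduct.lift (((LinearMap.mul V V).comp I.subtype).compl₂ I.subtype)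

set_option maxHeartbeats 1000000 in
set_option synthInstance.maxHeartbeats 400000 in
/-- For `V` a commutative ring, `I` an idempotent ideal with
`Ĩ = I ⊗ I` flat, a `V`-module `M` is killed by `I` iff `Ĩ ⊗ M = 0`. -/
theorem almost_zero_iff_tilde_tensor_zero
    {V : Type} [CommRing V] (I : Ideal V) (hI : I * I = I)
    (hflat : Module.Flat V (↥I ⊗[V] ↥I))
    (M : Type) [AddCommGroup M] [Module V M] :
    (∀ a ∈ I, ∀ m : M, a • m = 0) ↔ Subsingleton ((↥I ⊗[V] ↥I) ⊗[V] M) := by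
  constructor
  · intro h
    rw [subsingleton_iff_forall_eq (0 : (↥I ⊗[V] ↥I) ⊗[V] M)]
    intro z
    induction z using TensorProduct.induction_on with
    | zero => rfl
    | add x y hx hy => rw [hx, hy, add_zero]
    | tmul x m =>
      induction x using TensorProduct.induction_on with
      | zero => rw [zero_tmul]
      | add x y hx hy => rw [add_tmul, hx, hy, add_zero]
      | tmul a b =>
        have hb : (b : V) ∈ I * I := by rw [hI]; exact b.2
        have key : ∀ c ∈ I * I, c ∈ I ∧ ∀ hc : c ∈ I,
            (a ⊗ₜ[V] (⟨c, hc⟩ : I)) ⊗ₜ[V] m = 0 := by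
          intro c hc
          refine Submodule.mul_induction_on hc ?_ ?_
          · intro x hx y hy
            refine ⟨I.mul_mem_left x hy, fun hxy => ?_⟩
            have e : (⟨x * y, hxy⟩ : I) = x • (⟨y, hy⟩ : I) := by
              ext; simp [smul_eq_mul]
            rw [e, tmul_smul, TensorProduct.smul_tmul x _ m, h x hx m, tmul_zero]
          · intro c d ihc ihd
            refine ⟨I.add_mem ihc.1 ihd.1, fun hcd => ?_⟩
            have e : (⟨c + d, hcd⟩ : I) = (⟨c, ihc.1⟩ : I) + ⟨d, ihd.1⟩ := rfl
            rw [e, tmul_add, add_tmul, ihc.2 ihc.1, ihd.2 ihd.1, add_zero]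
        have := (key b hb).2 b.2
        simpa using this
  · intro h a ha m
    have ha' : a ∈ I * I := by rw [hI]; exact ha
    let f : (↥I ⊗[V] ↥I) ⊗[V] M →ₗ[V] M :=
      TensorProduct.lift ((LinearMap.lsmul V M).comp (idealMul I))
    have hf : ∀ (x y : ↥I), ((x : V) * y) • m = 0 := by
      intro x y
      have e : f ((x ⊗ₜ[V] y) ⊗ₜ[V] m) = ((x : V) * y) • m := by
        simp [f, idealMul]
      rw [← e, Subsingleton.elim ((x ⊗ₜ[V] y) ⊗ₜ[V] m)
        (0 : (↥I ⊗[V] ↥I) ⊗[V] M), map_zero]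
    refine Submodule.mul_induction_on ha'
      (fun x hx y hy => hf ⟨x, hx⟩ ⟨y, hy⟩) (fun c d ihc ihd => ?_)
    rw [add_smul, ihc, ihd, add_zero]
end

section
/- Let V be a commutative ring and I an idempotent ideal with Ĩ = I ⊗_V I flat. A morphism f : M → N of V-modules has almost zero kernel and almost zero cokernel if and only if the induced map Ĩ ⊗_V M → Ĩ ⊗_V N is an isomorphism. -/
set_option maxHeartbeats 1000000
set_option synthInstance.maxHeartbeats 400000

open TensorProduct

/-- The multiplication-action map `(I ⊗ I) ⊗ X → X`, `(a ⊗ b) ⊗ x ↦ (a*b) • x`. -/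
noncomputable def muMap {V : Type} [CommRing V] (I : Ideal V)
    (X : Type) [AddCommGroup X] [Module V X] :
    (↥I ⊗[V] ↥I) ⊗[V] X →ₗ[V] X :=
  TensorProduct.lift ((LinearMap.lsmul V X).comp
    (TensorProduct.lift ((LinearMap.mul V V).compl₁₂ I.subtype I.subtype)))

@[simp] theorem muMap_tmul {V : Type} [CommRing V] (I : Ideal V)
    (X : Type) [AddCommGroup X] [Module V X] (a b : ↥I) (x : X) :
    muMap I X ((a ⊗ₜ b) ⊗ₜ x) = ((a : V) * (b : V)) • x := rfl

/-- If `X` is almost zero then `Ĩ ⊗ X = 0`. -/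
theorem tilde_tensor_eq_zero {V : Type} [CommRing V] (I : Ideal V) (hI : I * I = I)
    (X : Type) [AddCommGroup X] [Module V X]
    (hX : ∀ a ∈ I, ∀ x : X, a • x = 0) (t : (↥I ⊗[V] ↥I) ⊗[V] X) : t = 0 := by
  have hmem : ∀ v : V, v ∈ I * I → v ∈ I := fun v hv => hI ▸ hv
  have key : ∀ (a : ↥I) (v : V) (hv : v ∈ I * I) (x : X),
      (a ⊗ₜ (⟨v, hmem v hv⟩ : ↥I)) ⊗ₜ[V] x = (0 : (↥I ⊗[V] ↥I) ⊗[V] X) := by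
    intro a v hv x
    induction hv using Submodule.mul_induction_on' with
    | mem_mul_mem c hc d hd =>
        have h1 : (⟨c * d, hmem _ (Submodule.mul_mem_mul hc hd)⟩ : ↥I)
            = d • (⟨c, hc⟩ : ↥I) := Subtype.ext (mul_comm c d)
        rw [h1, tmul_smul, smul_tmul, hX d hd x, tmul_zero]
    | add v hv w hw ihv ihw =>
        have h1 : (⟨v + w, hmem _ (add_mem hv hw)⟩ : ↥I)
            = (⟨v, hmem v hv⟩ : ↥I) + (⟨w, hmem w hw⟩ : ↥I) := rfl
        rw [h1, tmul_add, add_tmul, ihv, ihw, add_zero]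
  induction t with
  | zero => rfl
  | add s t ihs iht => rw [ihs, iht, add_zero]
  | tmul p x =>
      induction p with
      | zero => rw [zero_tmul]
      | add p q ihp ihq => rw [add_tmul, ihp, ihq, add_zero]
      | tmul a b =>
          have hb : (b : V) ∈ I * I := by rw [hI]; exact b.2
          have := key a (b : V) hb x
          convert this using 3

/-- a morphism `f : M → N` of `V`-modules has almost zero kernel and
almost zero cokernel iff the induced map `Ĩ ⊗ M → Ĩ ⊗ N` is an isomorphism. -/
theorem almost_iso_iff_tilde_tensor_iso
    {V : Type} [CommRing V] (I : Ideal V) (hI : I * I = I)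
    (hflat : Module.Flat V (↥I ⊗[V] ↥I))
    (M N : Type) [AddCommGroup M] [Module V M] [AddCommGroup N] [Module V N]
    (f : M →ₗ[V] N) :
    ((∀ a ∈ I, ∀ x ∈ LinearMap.ker f, a • x = 0) ∧
      (∀ a ∈ I, ∀ y : N ⧸ LinearMap.range f, a • y = 0)) ↔
    Function.Bijective (LinearMap.lTensor (↥I ⊗[V] ↥I) f) := by
  constructor
  · rintro ⟨hker, hcoker⟩
    constructor
    · -- injectivity
      rw [injective_iff_map_eq_zero]
      intro t ht
      have hex : Function.Exact
          (LinearMap.lTensor (↥I ⊗[V] ↥I) (LinearMap.ker f).subtype)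
          (LinearMap.lTensor (↥I ⊗[V] ↥I) f) :=
        Module.Flat.lTensor_exact (↥I ⊗[V] ↥I) f.exact_subtype_ker_map
      obtain ⟨s, rfl⟩ := (hex t).mp ht
      rw [tilde_tensor_eq_zero I hI _ (fun a ha x => Subtype.ext (by
            simpa using hker a ha (x : M) x.2)) s, map_zero]
    · -- surjectivity
      have hex : Function.Exact (LinearMap.lTensor (↥I ⊗[V] ↥I) f)
          (LinearMap.lTensor (↥I ⊗[V] ↥I) (LinearMap.range f).mkQ) :=
        lTensor_exact _ f.exact_map_mkQ_range (Submodule.mkQ_surjective _)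
      intro t
      exact (hex t).mp (tilde_tensor_eq_zero I hI _ (fun a ha y => hcoker a ha y) _)
  · rintro ⟨hinj, hsurj⟩
    -- naturality of muMap
    have hnat : (muMap I N).comp (LinearMap.lTensor (↥I ⊗[V] ↥I) f)
        = f.comp (muMap I M) := by
      apply TensorProduct.ext'
      intro p x
      induction p with
      | zero => simp
      | add p q ihp ihq => simp only [add_tmul, map_add, ihp, ihq]
      | tmul a b => simp [muMap, map_smul]
    constructor
    · intro a ha x hx
      have ha' : a ∈ I * I := by rw [hI]; exact ha
      induction ha' using Submodule.mul_induction_on' with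
      | mem_mul_mem c hc d hd =>
          have h0 : LinearMap.lTensor (↥I ⊗[V] ↥I) f
              (((⟨c, hc⟩ : ↥I) ⊗ₜ (⟨d, hd⟩ : ↥I)) ⊗ₜ x) = 0 := by
            rw [LinearMap.lTensor_tmul, LinearMap.mem_ker.mp hx, tmul_zero]
          have h1 : (((⟨c, hc⟩ : ↥I) ⊗ₜ (⟨d, hd⟩ : ↥I)) ⊗ₜ x
              : (↥I ⊗[V] ↥I) ⊗[V] M) = 0 := hinj (by rw [h0, map_zero])
          have := congrArg (muMap I M) h1
          simpa using this
      | add v hv w hw ihv ihw =>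
          rw [add_smul, ihv (hI ▸ hv), ihw (hI ▸ hw), add_zero]
    · intro a ha y
      obtain ⟨n, rfl⟩ := Submodule.mkQ_surjective _ y
      have ha' : a ∈ I * I := by rw [hI]; exact ha
      induction ha' using Submodule.mul_induction_on' with
      | mem_mul_mem c hc d hd =>
          obtain ⟨t, ht⟩ := hsurj (((⟨c, hc⟩ : ↥I) ⊗ₜ (⟨d, hd⟩ : ↥I)) ⊗ₜ n)
          have h1 : muMap I N (LinearMap.lTensor (↥I ⊗[V] ↥I) f t)
              = f (muMap I M t) := congrFun (congrArg DFunLike.coe hnat) t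
          rw [ht] at h1
          have h2 : (c * d) • n = f (muMap I M t) := by simpa using h1
          rw [← map_smul, h2, Submodule.mkQ_apply, Submodule.Quotient.mk_eq_zero]
          exact ⟨_, rfl⟩
      | add v hv w hw ihv ihw =>
          rw [add_smul, ihv (hI ▸ hv), ihw (hI ▸ hw), add_zero]
end

section
/- Let V be a commutative ring, I an idempotent ideal with Ĩ = I ⊗_V I flat, and M, N V-modules. Then the multiplication map (Ĩ ⊗_V M) ⊗_V (Ĩ ⊗_V N) → Ĩ ⊗_V (M ⊗_V N) is an isomorphism; in particular the functor Ĩ ⊗_V (−) is lax monoidal up to natural isomorphism on the subcategory of firm modules. -/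
open TensorProduct

/-- The multiplication `Ĩ ⊗ Ĩ → Ĩ`, `x ⊗ y ↦ (idealMul y) • x`. -/
noncomputable def tildeMul {V : Type} [CommRing V] (I : Ideal V) :
    ((↥I ⊗[V] ↥I) ⊗[V] (↥I ⊗[V] ↥I)) →ₗ[V] (↥I ⊗[V] ↥I) :=
  TensorProduct.lift
    (((LinearMap.lsmul V (↥I ⊗[V] ↥I)).comp (idealMul I)).flip)

/-!
`Ĩ` is firm: the action `I ⊗ Ĩ → Ĩ` is injective because `Ĩ` is flat, and surjective because
`I = I²` lets every `a ⊗ b` be rewritten as a sum of `c • (d ⊗ b)` with `c ∈ I`. Hence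
`Ĩ ⊗ Ĩ ≅ I ⊗ (I ⊗ Ĩ) ≅ I ⊗ Ĩ ≅ Ĩ`, and this composite is the multiplication `tildeMul`.
The map of the theorem is `tildeMul ⊗ id` after a reshuffling of factors.
-/

namespace Ideal

variable {V : Type*} [CommSemiring V] (I : Ideal V)

/-- `i ⊗ p ↦ i • p`; a module `P` is firm when this map is bijective. -/
noncomputable def tensorAction (P : Type*) [AddCommMonoid P] [Module V P] : I ⊗[V] P →ₗ[V] P :=
  (TensorProduct.lid V P).toLinearMap ∘ₗ I.subtype.rTensor P

section

variable {P : Type*} [AddCommMonoid P] [Module V P]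

@[simp]
lemma tensorAction_tmul (i : I) (p : P) : I.tensorAction P (i ⊗ₜ p) = (i : V) • p := by
  simp [tensorAction]

lemma tensorAction_injective [Module.Flat V P] : Function.Injective (I.tensorAction P) :=
  (TensorProduct.lid V P).injective.comp
    (Module.Flat.rTensor_preserves_injective_linearMap _ Subtype.val_injective)

lemma range_tensorAction : LinearMap.range (I.tensorAction P) = I • ⊤ := by
  rw [tensorAction, LinearMap.range_comp]
  exact Submodule.map_range_rTensor_subtype_lid

end

lemma smul_top_eq_top_of_mul_self (hI : I * I = I) (Q : Type*) [AddCommMonoid Q] [Module V Q] :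
    I • (⊤ : Submodule V (I ⊗[V] Q)) = ⊤ := by
  have tmul_mem : ∀ (r : V) (hr : r ∈ I * I) (q : Q),
      (⟨r, hI ▸ hr⟩ : I) ⊗ₜ[V] q ∈ I • (⊤ : Submodule V (I ⊗[V] Q)) := by
    intro r hr q
    induction hr using Submodule.mul_induction_on' with
    | mem_mul_mem c hc d hd =>
      have : (⟨c * d, hI ▸ Submodule.mul_mem_mul hc hd⟩ : I) ⊗ₜ[V] q =
          c • ((⟨d, hd⟩ : I) ⊗ₜ[V] q) := by
        rw [TensorProduct.smul_tmul']
        rfl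
      rw [this]
      exact Submodule.smul_mem_smul hc Submodule.mem_top
    | add x hx y hy ihx ihy =>
      rw [show (⟨x + y, hI ▸ add_mem hx hy⟩ : I) = ⟨x, hI ▸ hx⟩ + ⟨y, hI ▸ hy⟩ from rfl,
        TensorProduct.add_tmul]
      exact add_mem ihx ihy
  rw [eq_top_iff]
  rintro z -
  induction z using TensorProduct.induction_on with
  | zero => exact zero_mem _
  | tmul a q => exact tmul_mem a (hI.symm ▸ a.2) q
  | add x y hx hy => exact add_mem hx hy

lemma tensorAction_bijective (hI : I * I = I) (Q : Type*) [AddCommMonoid Q] [Module V Q]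
    [Module.Flat V (I ⊗[V] Q)] : Function.Bijective (I.tensorAction (I ⊗[V] Q)) := by
  refine ⟨I.tensorAction_injective, ?_⟩
  rw [← LinearMap.range_eq_top, range_tensorAction, smul_top_eq_top_of_mul_self I hI]

end Ideal

section

variable {V : Type} [CommRing V] (I : Ideal V)

lemma tildeMul_eq_comp_tensorAction :
    tildeMul I = I.tensorAction (I ⊗[V] I) ∘ₗ (I.tensorAction (I ⊗[V] I)).lTensor I ∘ₗ
      (TensorProduct.assoc V I I (I ⊗[V] I)).toLinearMap ∘ₗ
      (TensorProduct.comm V (I ⊗[V] I) (I ⊗[V] I)).toLinearMap := by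
  refine TensorProduct.ext_fourfold' fun a b x y => ?_
  simp [tildeMul, idealMul, smul_smul, mul_comm]

lemma tildeMul_bijective (hI : I * I = I) [Module.Flat V (I ⊗[V] I)] :
    Function.Bijective (tildeMul I) := by
  let act := LinearEquiv.ofBijective _ (I.tensorAction_bijective hI I)
  rw [tildeMul_eq_comp_tensorAction]
  exact act.bijective.comp <| (act.lTensor I).bijective.comp <|
    (TensorProduct.assoc V _ _ _).bijective.comp (TensorProduct.comm V _ _).bijective

end

/-- the multiplication map
`(Ĩ ⊗ M) ⊗ (Ĩ ⊗ N) → Ĩ ⊗ (M ⊗ N)` is an isomorphism; in particular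
`Ĩ ⊗ (−)` is lax monoidal up to natural isomorphism on firm modules. -/
theorem tilde_tensor_lax_monoidal
    {V : Type} [CommRing V] (I : Ideal V) (hI : I * I = I)
    (hflat : Module.Flat V (↥I ⊗[V] ↥I))
    (M N : Type) [AddCommGroup M] [Module V M] [AddCommGroup N] [Module V N] :
    Function.Bijective
      ((TensorProduct.map (tildeMul I) (LinearMap.id : (M ⊗[V] N) →ₗ[V] (M ⊗[V] N))) ∘ₗ
        (TensorProduct.tensorTensorTensorComm V (↥I ⊗[V] ↥I) M (↥I ⊗[V] ↥I) N).toLinearMap) := by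
  let e := LinearEquiv.ofBijective (tildeMul I) (tildeMul_bijective I hI)
  exact (e.rTensor (M ⊗[V] N)).bijective.comp
    (TensorProduct.tensorTensorTensorComm V _ _ _ _).bijective
end

section
/- Let C be a category with a terminal object and an initial object, and suppose C is pointed (initial ≅ terminal). In the arrow category Ar(C) = Fun(Δ¹, C) of a category C with kernels and cokernels (e.g., C abelian or pointed with finite limits and colimits), the cokernel functor cok : Ar(C) → Ar(C), (f : X → Y) ↦ (Y → coker f), is left adjoint to the kernel functor ker : Ar(C) → Ar(C), (f : X → Y) ↦ (ker f → X). -/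
/-! For `f : X ⟶ Y` and `g : A ⟶ B`, a square from `cokernel.π f` to `g` and a square from `f` to
`kernel.ι g` are both determined by the single map `u : Y ⟶ A` they contain, and either exists
exactly when `f ≫ u ≫ g = 0`: the remaining edge is `cokernel.desc f (u ≫ g)`, respectively
`kernel.lift g (f ≫ u)`. Naturality of the resulting bijection is automatic, since `cokernel.π f`
is epi and `kernel.ι g` is mono, so a square out of the one or into the other is determined by a
single edge. -/

open CategoryTheory Limits

noncomputable section

universe v u

variable (C : Type u) [Category.{v} C] [HasZeroObject C] [HasZeroMorphisms C]
  [HasKernels C] [HasCokernels C]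

/-- The cokernel endofunctor on the arrow category:
`(f : X → Y) ↦ (Y → coker f)`. -/
def cokFunctor : Arrow C ⥤ Arrow C where
  obj f := Arrow.mk (cokernel.π f.hom)
  map {f g} sq :=
    Arrow.homMk (u := sq.right)
      (v := cokernel.map f.hom g.hom sq.left sq.right sq.w.symm)
      (by simp)

/-- The kernel endofunctor on the arrow category:
`(f : X → Y) ↦ (ker f → X)`. -/
def kerFunctor : Arrow C ⥤ Arrow C where
  obj f := Arrow.mk (kernel.ι f.hom)
  map {f g} sq :=
    Arrow.homMk (u := kernel.map f.hom g.hom sq.left sq.right sq.w.symm)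
      (v := sq.left)
      (by simp)

section

variable {C : Type u} [Category.{v} C]

lemma CategoryTheory.Arrow.hom_ext_of_epi {X Y : C} {p : X ⟶ Y} [Epi p] {g : Arrow C}
    {sq sq' : Arrow.mk p ⟶ g} (h : sq.left = sq'.left) : sq = sq' :=
  Arrow.hom_ext _ _ h ((cancel_epi p).1 (by rw [← Arrow.w_mk_left sq, ← Arrow.w_mk_left sq', h]))

lemma CategoryTheory.Arrow.hom_ext_of_mono {f : Arrow C} {X Y : C} {i : X ⟶ Y} [Mono i]
    {sq sq' : f ⟶ Arrow.mk i} (h : sq.right = sq'.right) : sq = sq' :=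
  Arrow.hom_ext _ _ ((cancel_mono i).1 (by rw [Arrow.w_mk_right sq, Arrow.w_mk_right sq', h])) h

variable [HasZeroMorphisms C]

def cokernelArrowHomEquiv {X Y : C} (f : X ⟶ Y) [HasCokernel f] (g : Arrow C) :
    (Arrow.mk (cokernel.π f) ⟶ g) ≃ {u : Y ⟶ g.left // f ≫ u ≫ g.hom = 0} where
  toFun sq := ⟨sq.left, by simp⟩
  invFun u := Arrow.homMk u.1 (cokernel.desc f (u.1 ≫ g.hom) (by simpa using u.2))
    (cokernel.π_desc f _ _).symm
  left_inv _ := Arrow.hom_ext_of_epi rfl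
  right_inv _ := rfl

def arrowHomKernelEquiv (f : Arrow C) {A B : C} (g : A ⟶ B) [HasKernel g] :
    (f ⟶ Arrow.mk (kernel.ι g)) ≃ {u : f.right ⟶ A // f.hom ≫ u ≫ g = 0} where
  toFun sq := ⟨sq.right, by simp [← Arrow.w_mk_right_assoc]⟩
  invFun u := Arrow.homMk (kernel.lift g (f.hom ≫ u.1) (by simpa using u.2)) u.1
    (kernel.lift_ι g _ _)
  left_inv _ := Arrow.hom_ext_of_mono rfl
  right_inv _ := rfl

variable (C) [HasKernels C] [HasCokernels C]

def cokKerAdjunction : cokFunctor C ⊣ kerFunctor C :=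
  Adjunction.mkOfHomEquiv
    { homEquiv f g := (cokernelArrowHomEquiv f.hom g).trans (arrowHomKernelEquiv f g.hom).symm
      homEquiv_naturality_left_symm _ _ := Arrow.hom_ext_of_epi rfl
      homEquiv_naturality_right _ _ := Arrow.hom_ext_of_mono rfl }

end

/-- in the arrow category of a pointed category with kernels and
cokernels, the cokernel functor is left adjoint to the kernel functor. -/
theorem cok_adj_ker : Nonempty (cokFunctor C ⊣ kerFunctor C) :=
  ⟨cokKerAdjunction C⟩

end
end

section
/- Let C be a pointed monoidal category with finite colimits in which the tensor product preserves colimits in each variable. For morphisms f : X₀ → X₁ and g : Y₀ → Y₁, there is a natural isomorphism coker(f □ g) ≅ coker(f) ⊗ coker(g), where f □ g : (X₀ ⊗ Y₁) ⊔_{X₀ ⊗ Y₀} (X₁ ⊗ Y₀) → X₁ ⊗ Y₁ is the pushout-product. -/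
/-!
Killing `u` and then the image of `v` is the same as killing the map `(u, v)` out of a pushout.
For `f □ g` take `u = f ▷ Y₁` and `v = X₁ ◁ g`. As `- ⊗ Y₁` is right exact, the cokernel of `u` is
`π_f ▷ Y₁ : X₁ ⊗ Y₁ ⟶ coker f ⊗ Y₁`, and `v ≫ (π_f ▷ Y₁) = (π_f ▷ Y₀) ≫ (coker f ◁ g)` with
`π_f ▷ Y₀` epi. So the remaining cokernel is that of `coker f ◁ g`, which is `coker f ⊗ coker g`
as `coker f ⊗ -` is right exact.
-/

open CategoryTheory Limits MonoidalCategory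

noncomputable section

universe v u

variable {C : Type u} [Category.{v} C] [MonoidalCategory C]
  [HasZeroObject C] [HasZeroMorphisms C] [HasFiniteColimits C]

/-- The pushout-product
`f □ g : (X₀ ⊗ Y₁) ⊔_{X₀ ⊗ Y₀} (X₁ ⊗ Y₀) ⟶ X₁ ⊗ Y₁`. -/
def pushoutProduct {X₀ X₁ Y₀ Y₁ : C} (f : X₀ ⟶ X₁) (g : Y₀ ⟶ Y₁) :
    pushout (X₀ ◁ g) (f ▷ Y₀) ⟶ X₁ ⊗ Y₁ :=
  pushout.desc (f ▷ Y₁) (X₁ ◁ g) (whisker_exchange f g)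

section CokernelOfPushoutDesc

variable {D : Type*} [Category D] [HasZeroMorphisms D]
  {S A B T : D} {h : S ⟶ A} {k : S ⟶ B} [HasPushout h k]
  {u : A ⟶ T} {v : B ⟶ T} (w : h ≫ u = k ≫ v)

theorem pushout_desc_comp_cokernelCofork_π (c : CokernelCofork u)
    (d : CokernelCofork (v ≫ c.π)) : pushout.desc u v w ≫ c.π ≫ d.π = 0 := by
  apply pushout.hom_ext
  · rw [pushout.inl_desc_assoc, CokernelCofork.condition_assoc, zero_comp, comp_zero]
  · rw [pushout.inr_desc_assoc, ← Category.assoc, CokernelCofork.condition, comp_zero]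

def isColimitCokernelCoforkPushoutDesc {c : CokernelCofork u} (hc : IsColimit c)
    {d : CokernelCofork (v ≫ c.π)} (hd : IsColimit d) :
    IsColimit (CokernelCofork.ofπ _ (pushout_desc_comp_cokernelCofork_π w c d)) :=
  Cofork.IsColimit.mk' _ fun s ↦ by
    obtain ⟨l₁, hl₁⟩ := CokernelCofork.IsColimit.desc' hc s.π
      (by simpa only [pushout.inl_desc_assoc, comp_zero] using
        pushout.inl h k ≫= CokernelCofork.condition s)
    obtain ⟨l₂, hl₂⟩ := CokernelCofork.IsColimit.desc' hd l₁
      (by simpa only [pushout.inr_desc_assoc, comp_zero, Category.assoc, hl₁] using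
        pushout.inr h k ≫= CokernelCofork.condition s)
    refine ⟨l₂, by simp [hl₂, hl₁], fun {m} hm ↦ ?_⟩
    refine Cofork.IsColimit.hom_ext hd (Cofork.IsColimit.hom_ext hc ?_)
    simpa [hl₂, hl₁] using hm

end CokernelOfPushoutDesc

/-- in a pointed monoidal category with finite colimits in which
the tensor product preserves colimits in each variable, there is a natural
isomorphism `coker(f □ g) ≅ coker f ⊗ coker g`. -/
theorem cokernel_pushoutProduct_iso
    [∀ X : C, PreservesFiniteColimits (tensorLeft X)]
    [∀ X : C, PreservesFiniteColimits (tensorRight X)]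
    {X₀ X₁ Y₀ Y₁ : C} (f : X₀ ⟶ X₁) (g : Y₀ ⟶ Y₁) :
    Nonempty (cokernel (pushoutProduct f g) ≅ cokernel f ⊗ cokernel g) := by
  have hf : IsColimit (CokernelCofork.ofπ (cokernel.π f ▷ Y₁)
      (by rw [← comp_whiskerRight, cokernel.condition]; exact (tensorRight Y₁).map_zero _ _)) :=
    isColimitOfHasCokernelOfPreservesColimit (tensorRight Y₁) f
  have hg : IsColimit (CokernelCofork.ofπ (cokernel f ◁ cokernel.π g)
      (by rw [← whiskerLeft_comp, cokernel.condition]; exact (tensorLeft _).map_zero _ _)) :=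
    isColimitOfHasCokernelOfPreservesColimit (tensorLeft (cokernel f)) g
  have : Epi (cokernel.π f ▷ Y₀) := (tensorRight Y₀).map_epi (cokernel.π f)
  have hg' : IsColimit (CokernelCofork.ofπ (cokernel f ◁ cokernel.π g) _ :
      CokernelCofork (X₁ ◁ g ≫ cokernel.π f ▷ Y₁)) :=
    isCokernelEpiComp hg (cokernel.π f ▷ Y₀) (whisker_exchange _ _)
  exact ⟨(cokernelIsCokernel _).coconePointUniqueUpToIso
    (isColimitCokernelCoforkPushoutDesc _ hf hg')⟩

end
end

section
/- Let V be a commutative ring and I an idempotent ideal with Ĩ = I ⊗_V I flat. Then the multiplication map Ĩ ⊗_V I → Ĩ is an isomorphism of V-modules. -/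
open TensorProduct

/-- for `I` an idempotent ideal with `Ĩ = I ⊗ I` flat, the
multiplication map `Ĩ ⊗ I → Ĩ` (induced by the inclusion `I → V` and the right
unitor) is an isomorphism of `V`-modules. -/
theorem tilde_tensor_I_iso
    {V : Type} [CommRing V] (I : Ideal V) (hI : I * I = I)
    (hflat : Module.Flat V (↥I ⊗[V] ↥I)) :
    Function.Bijective
      ((TensorProduct.rid V (↥I ⊗[V] ↥I)).toLinearMap ∘ₗ
        LinearMap.lTensor (↥I ⊗[V] ↥I) I.subtype) := by
  set f := ((TensorProduct.rid V (↥I ⊗[V] ↥I)).toLinearMap ∘ₗ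
        LinearMap.lTensor (↥I ⊗[V] ↥I) I.subtype) with hf
  constructor
  · rw [hf, LinearMap.coe_comp]
    apply Function.Injective.comp (LinearEquiv.injective _)
    exact Module.Flat.lTensor_preserves_injective_linearMap I.subtype I.injective_subtype
  · intro y
    suffices h : y ∈ LinearMap.range f by exact h
    induction y using TensorProduct.induction_on with
    | zero => exact zero_mem _
    | add x y hx hy => exact add_mem hx hy
    | tmul a b =>
      obtain ⟨b, hb⟩ := b
      have hb' : b ∈ I * I := by rw [hI]; exact hb
      have key : ∀ (r : V) (hr : r ∈ I * I),
          a ⊗ₜ[V] (⟨r, hI ▸ hr⟩ : I) ∈ LinearMap.range f := by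
        intro r hr
        refine Submodule.mul_induction_on'
          (C := fun r hr => a ⊗ₜ[V] (⟨r, hI ▸ hr⟩ : I) ∈ LinearMap.range f) ?_ ?_ hr
        · intro m hm n hn
          refine ⟨(a ⊗ₜ[V] ⟨m, hm⟩) ⊗ₜ[V] ⟨n, hn⟩, ?_⟩
          simp only [hf, LinearMap.comp_apply, LinearMap.lTensor_tmul,
            Submodule.coe_subtype, LinearEquiv.coe_coe, TensorProduct.rid_tmul,
            TensorProduct.smul_tmul]
          rw [← TensorProduct.tmul_smul]
          congr 1
          apply Subtype.ext
          simp [mul_comm]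
        · intro x hx y hy ihx ihy
          have : a ⊗ₜ[V] (⟨x + y, hI ▸ add_mem hx hy⟩ : I)
              = a ⊗ₜ[V] (⟨x, hI ▸ hx⟩ : I) + a ⊗ₜ[V] (⟨y, hI ▸ hy⟩ : I) := by
            rw [← TensorProduct.tmul_add]; rfl
          rw [this]

          exact add_mem ihx ihy
      exact key b hb'
end
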